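/- arXiv:2206.08868 — 3 statements merged into one kernel-verified Lean document; each statement's English description precedes it below -/
import Mathlib

section
/- If f is convex and the CG-BiO iterates are run with any stepsizes γ_k ∈ [0,1], then for every k ≥ 0, f(x_{k+1}) − f* ≤ (1 − γ_k)(f(x_k) − f*) + (1/2) γ_k² L_f D², where f* = min_{s∈X*_g} f(s). -/
open scoped InnerProductSpace
open Set

/-! The minimiser `x*` of `f` over `X*_g` lies in every linearised feasible set `X_k`: by convexity
of `g`, `⟪∇g(x_k), x* - x_k⟫ ≤ g(x*) - g(x_k) ≤ g(x_0) - g(x_k)`. So `s_k` does at least as well as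
`x*` on the linearisation of `f` at `x_k`, and the usual Frank–Wolfe estimate (descent lemma for
the `L_f`-smooth `f`, then the gradient inequality of the convex `f` at `x*`) gives the recursion
with `f* = f(x*)`. -/

section Gradient

variable {E : Type*} [NormedAddCommGroup E] [InnerProductSpace ℝ E] [CompleteSpace E]
  {f : E → ℝ}

theorem HasGradientAt.hasDerivAt_comp_add_smul {f' x v : E} {t : ℝ}
    (h : HasGradientAt f f' (x + t • v)) :
    HasDerivAt (fun t : ℝ => f (x + t • v)) ⟪f', v⟫_ℝ t := by
  have hline : HasDerivAt (fun t : ℝ => x + t • v) v t := by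
    simpa using ((hasDerivAt_id t).smul_const v).const_add x
  simpa [Function.comp_def] using h.hasFDerivAt.comp_hasDerivAt t hline

theorem ConvexOn.add_inner_le_of_hasGradientAt {f' x : E} (hf : ConvexOn ℝ univ f)
    (hx : HasGradientAt f f' x) (y : E) : f x + ⟪f', y - x⟫_ℝ ≤ f y := by
  have hline : ConvexOn ℝ univ (fun t : ℝ => f (x + t • (y - x))) := by
    simpa [Function.comp_def, AffineMap.lineMap_apply_module', add_comm] using
      hf.comp_affineMap (AffineMap.lineMap x y)
  have hderiv : HasDerivAt (fun t : ℝ => f (x + t • (y - x))) ⟪f', y - x⟫_ℝ 0 :=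
    HasGradientAt.hasDerivAt_comp_add_smul (by simpa using hx)
  have hslope := hline.le_slope_of_hasDerivAt (mem_univ 0) (mem_univ 1) one_pos hderiv
  simp only [slope_def_field, one_smul, zero_smul, add_zero, add_sub_cancel, sub_zero,
    div_one] at hslope
  linarith

theorem le_add_inner_add_of_lipschitz_gradient {f' : E → E} {L : ℝ}
    (hf : ∀ x, HasGradientAt f (f' x) x) (hLip : ∀ x y, ‖f' x - f' y‖ ≤ L * ‖x - y‖) (x y : E) :
    f y ≤ f x + ⟪f' x, y - x⟫_ℝ + L / 2 * ‖y - x‖ ^ 2 := by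
  set v := y - x
  have hderiv (t : ℝ) : HasDerivAt (fun t : ℝ => f (x + t • v)) ⟪f' (x + t • v), v⟫_ℝ t :=
    (hf _).hasDerivAt_comp_add_smul
  have hbound (t : ℝ) : HasDerivAt (fun t : ℝ => f x + t * ⟪f' x, v⟫_ℝ + L / 2 * t ^ 2 * ‖v‖ ^ 2)
      (⟪f' x, v⟫_ℝ + L * t * ‖v‖ ^ 2) t := by
    refine ((((hasDerivAt_id t).mul_const ⟪f' x, v⟫_ℝ).const_add (f x)).add
      (((hasDerivAt_pow 2 t).const_mul (L / 2)).mul_const (‖v‖ ^ 2))).congr_deriv ?_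
    push_cast; ring
  have hslope (t : ℝ) (ht : 0 ≤ t) : ⟪f' (x + t • v), v⟫_ℝ ≤ ⟪f' x, v⟫_ℝ + L * t * ‖v‖ ^ 2 :=
    calc ⟪f' (x + t • v), v⟫_ℝ = ⟪f' x, v⟫_ℝ + ⟪f' (x + t • v) - f' x, v⟫_ℝ := by
          rw [inner_sub_left]; ring
      _ ≤ ⟪f' x, v⟫_ℝ + ‖f' (x + t • v) - f' x‖ * ‖v‖ := by
          gcongr; exact real_inner_le_norm _ _
      _ ≤ ⟪f' x, v⟫_ℝ + L * ‖t • v‖ * ‖v‖ := by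
          gcongr; simpa using hLip (x + t • v) x
      _ = ⟪f' x, v⟫_ℝ + L * t * ‖v‖ ^ 2 := by
          rw [norm_smul, Real.norm_of_nonneg ht]; ring
  have hcompare := image_le_of_deriv_right_le_deriv_boundary
    (fun t _ => (hderiv t).continuousAt.continuousWithinAt) (fun t _ => (hderiv t).hasDerivWithinAt)
    (by simp) (fun t _ => (hbound t).continuousAt.continuousWithinAt)
    (fun t _ => (hbound t).hasDerivWithinAt) (fun t ht => hslope t ht.1)
    (right_mem_Icc.2 zero_le_one)
  simpa [v] using hcompare

theorem frankWolfe_step_le {f' : E → E} {L D γ : ℝ} (hf : ConvexOn ℝ univ f)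
    (hf' : ∀ x, HasGradientAt f (f' x) x) (hLip : ∀ x y, ‖f' x - f' y‖ ≤ L * ‖x - y‖)
    (hL : 0 ≤ L) (hγ : 0 ≤ γ) {x s z : E} (hsz : ⟪f' x, s⟫_ℝ ≤ ⟪f' x, z⟫_ℝ)
    (hsx : ‖s - x‖ ≤ D) :
    f ((1 - γ) • x + γ • s) - f z ≤ (1 - γ) * (f x - f z) + 1 / 2 * γ ^ 2 * L * D ^ 2 := by
  have hstep : (1 - γ) • x + γ • s - x = γ • (s - x) := by module
  have hdescent := le_add_inner_add_of_lipschitz_gradient hf' hLip x ((1 - γ) • x + γ • s)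
  rw [hstep, real_inner_smul_right, norm_smul, Real.norm_of_nonneg hγ, mul_pow] at hdescent
  have hlinear : ⟪f' x, s - x⟫_ℝ ≤ f z - f x := by
    have := hf.add_inner_le_of_hasGradientAt (hf' x) z
    rw [inner_sub_right] at this ⊢
    linarith
  have hsq : ‖s - x‖ ^ 2 ≤ D ^ 2 := pow_le_pow_left₀ (norm_nonneg _) hsx 2
  nlinarith [mul_le_mul_of_nonneg_left hlinear hγ,
    mul_le_mul_of_nonneg_left hsq (by positivity : 0 ≤ L / 2 * γ ^ 2)]

end Gradient

theorem isCompact_setOf_isMinOn {X : Type*} [TopologicalSpace X] {Z : Set X} {g : X → ℝ}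
    (hZ : IsCompact Z) (hg : Continuous g) : IsCompact {z | z ∈ Z ∧ IsMinOn g Z z} := by
  have : {z | z ∈ Z ∧ IsMinOn g Z z} = Z ∩ ⋂ y ∈ Z, {z | g z ≤ g y} := by
    ext z
    simp [IsMinOn, IsMinFilter]
  rw [this]
  exact hZ.inter_right (isClosed_biInter fun y _ => isClosed_le hg continuous_const)

theorem Convex.frankWolfe_iterate_mem {E : Type*} [AddCommGroup E] [Module ℝ E] {Z : Set E}
    (hZ : Convex ℝ Z) {x s : ℕ → E} {γ : ℕ → ℝ} (hγ : ∀ k, γ k ∈ Icc (0 : ℝ) 1)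
    (hx0 : x 0 ∈ Z) (hs : ∀ k, s k ∈ Z) (hupd : ∀ k, x (k + 1) = (1 - γ k) • x k + γ k • s k) :
    ∀ k, x k ∈ Z
  | 0 => hx0
  | k + 1 => hupd k ▸ hZ (hZ.frankWolfe_iterate_mem hγ hx0 hs hupd k) (hs k)
      (by linarith [(hγ k).2]) (hγ k).1 (by ring)

theorem statement5_general {d : ℕ} (Z : Set (EuclideanSpace ℝ (Fin d)))
    (hZcomp : IsCompact Z) (hZconv : Convex ℝ Z)
    (D : ℝ) (hD : ∀ x ∈ Z, ∀ y ∈ Z, ‖x - y‖ ≤ D)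
    (f g : EuclideanSpace ℝ (Fin d) → ℝ)
    (gradf gradg : EuclideanSpace ℝ (Fin d) → EuclideanSpace ℝ (Fin d))
    (hfconv : ConvexOn ℝ Set.univ f)
    (hfdiff : ∀ x, HasGradientAt f (gradf x) x)
    (Lf : ℝ) (hLf : 0 ≤ Lf)
    (hfLip : ∀ x y, ‖gradf x - gradf y‖ ≤ Lf * ‖x - y‖)
    (hgconv : ConvexOn ℝ Set.univ g)
    (hgdiff : ∀ x, HasGradientAt g (gradg x) x)
    (x s : ℕ → EuclideanSpace ℝ (Fin d)) (γ : ℕ → ℝ)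
    (hγ : ∀ k, γ k ∈ Set.Icc (0:ℝ) 1)
    (hx0 : x 0 ∈ Z)
    (hsmem : ∀ k, s k ∈ Z ∧ ⟪gradg (x k), s k - x k⟫_ℝ ≤ g (x 0) - g (x k))
    (hsmin : ∀ k, ∀ s' ∈ Z, ⟪gradg (x k), s' - x k⟫_ℝ ≤ g (x 0) - g (x k) →
      ⟪gradf (x k), s k⟫_ℝ ≤ ⟪gradf (x k), s'⟫_ℝ)
    (hupd : ∀ k, x (k + 1) = (1 - γ k) • x k + γ k • s k)
    (k : ℕ) :
    f (x (k + 1)) - sInf (f '' {z | z ∈ Z ∧ IsMinOn g Z z}) ≤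
      (1 - γ k) * (f (x k) - sInf (f '' {z | z ∈ Z ∧ IsMinOn g Z z}))
        + (1/2) * (γ k)^2 * Lf * D^2 := by
  have hfcont : Continuous f := continuous_iff_continuousAt.2 fun z => (hfdiff z).continuousAt
  have hgcont : Continuous g := continuous_iff_continuousAt.2 fun z => (hgdiff z).continuousAt
  obtain ⟨zg, hzg⟩ := hZcomp.exists_isMinOn ⟨x 0, hx0⟩ hgcont.continuousOn
  obtain ⟨xs, ⟨hxsZ, hxsmin⟩, hfstar⟩ :=
    (isCompact_setOf_isMinOn hZcomp hgcont).exists_sInf_image_eq ⟨zg, hzg⟩ hfcont.continuousOn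
  have hxZ := hZconv.frankWolfe_iterate_mem hγ hx0 (fun k => (hsmem k).1) hupd
  have hfeas : ⟪gradg (x k), xs - x k⟫_ℝ ≤ g (x 0) - g (x k) :=
    le_sub_iff_add_le'.2
      ((hgconv.add_inner_le_of_hasGradientAt (hgdiff (x k)) xs).trans (hxsmin hx0))
  rw [hfstar, hupd k]
  exact frankWolfe_step_le hfconv hfdiff hfLip hLf (hγ k).1 (hsmin k xs hxsZ hfeas)
    (hD _ (hsmem k).1 _ (hxZ k))

/-- For convex `f` and CG-BiO iterates with stepsizes `γ_k ∈ [0,1]`,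
`f(x_{k+1}) − f* ≤ (1 − γ_k)(f(x_k) − f*) + (1/2)γ_k² L_f D²`,
where `f* = min_{s∈X*_g} f(s)`. -/
theorem statement5 {d : ℕ} (Z : Set (EuclideanSpace ℝ (Fin d)))
    (hZne : Z.Nonempty) (hZcomp : IsCompact Z) (hZconv : Convex ℝ Z)
    (D : ℝ) (hD : ∀ x ∈ Z, ∀ y ∈ Z, ‖x - y‖ ≤ D)
    (f g : EuclideanSpace ℝ (Fin d) → ℝ)
    (gradf gradg : EuclideanSpace ℝ (Fin d) → EuclideanSpace ℝ (Fin d))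
    (hfconv : ConvexOn ℝ Set.univ f)
    (hfdiff : ∀ x, HasGradientAt f (gradf x) x)
    (Lf : ℝ) (hLf : 0 ≤ Lf)
    (hfLip : ∀ x y, ‖gradf x - gradf y‖ ≤ Lf * ‖x - y‖)
    (hgconv : ConvexOn ℝ Set.univ g)
    (hgdiff : ∀ x, HasGradientAt g (gradg x) x)
    (x s : ℕ → EuclideanSpace ℝ (Fin d)) (γ : ℕ → ℝ)
    (hγ : ∀ k, γ k ∈ Set.Icc (0:ℝ) 1)
    (hx0 : x 0 ∈ Z)
    (hsmem : ∀ k, s k ∈ Z ∧ ⟪gradg (x k), s k - x k⟫_ℝ ≤ g (x 0) - g (x k))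
    (hsmin : ∀ k, ∀ s' ∈ Z, ⟪gradg (x k), s' - x k⟫_ℝ ≤ g (x 0) - g (x k) →
      ⟪gradf (x k), s k⟫_ℝ ≤ ⟪gradf (x k), s'⟫_ℝ)
    (hupd : ∀ k, x (k + 1) = (1 - γ k) • x k + γ k • s k)
    (k : ℕ) :
    f (x (k + 1)) - sInf (f '' {z | z ∈ Z ∧ IsMinOn g Z z}) ≤
      (1 - γ k) * (f (x k) - sInf (f '' {z | z ∈ Z ∧ IsMinOn g Z z}))
        + (1/2) * (γ k)^2 * Lf * D^2 :=
  statement5_general Z hZcomp hZconv D hD f g gradf gradg hfconv hfdiff Lf hLf hfLip hgconv hgdiff x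
    s γ hγ hx0 hsmem hsmin hupd k
end

section
/- Suppose f is convex and the CG-BiO iterates are run with stepsizes γ_k = 2/(k+2). Then for every K ≥ 1, f(x_K) − f* ≤ 2 L_f D²/(K+1) and g(x_K) − g* ≤ 2 L_g D²/(K+1) + ε_g/2. -/
/-!
Both optimality gaps obey the Frank–Wolfe recursion `h_{k+1} ≤ (1 - γ_k) h_k + γ_k² L D² / 2`.
By the descent lemma this needs only that the direction `s_k - x_k` brings the linearization down
to the target level: for `g`, with target `g x₀`, that is the cutting plane defining `X_k`; for `f`,
with target `f z` for a minimizer `z` of `g` on `Z`, convexity of `g` puts `z` in `X_k`, so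
`⟪∇f x_k, s_k⟫ ≤ ⟪∇f x_k, z⟫`, and convexity of `f` bounds the latter. With `γ_k = 2 / (k + 2)`
the recursion gives `h_K ≤ 2 L D² / (K + 1)` by induction.
-/

open scoped InnerProductSpace
open AffineMap Set

section Gradient

variable {E : Type*} [NormedAddCommGroup E] [InnerProductSpace ℝ E] [CompleteSpace E]
  {f : E → ℝ} {f' : E → E} {s : Set E} {x y : E}

theorem HasGradientAt.hasDerivAt_comp_lineMap {v : E} {t : ℝ}
    (hf : HasGradientAt f v (lineMap x y t)) :
    HasDerivAt (fun t => f (lineMap x y t)) ⟪v, y - x⟫_ℝ t := by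
  have h := hf.hasFDerivAt.comp_hasDerivAt t hasDerivAt_lineMap
  rw [InnerProductSpace.toDual_apply_apply] at h
  exact h

theorem ConvexOn.inner_sub_le_sub_of_hasGradientAt (hfc : ConvexOn ℝ s f) (hx : x ∈ s)
    (hy : y ∈ s) (hf : HasGradientAt f (f' x) x) :
    ⟪f' x, y - x⟫_ℝ ≤ f y - f x := by
  have hφ := (hfc.comp_affineMap (lineMap x y)).le_slope_of_hasDerivAt
    (x := 0) (y := 1) (by simpa using hx) (by simpa using hy) zero_lt_one
    (HasGradientAt.hasDerivAt_comp_lineMap (by simpa using hf))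
  simpa [slope_def_field] using hφ

theorem le_add_inner_sub_add_sq_of_lipschitz_gradient (hs : Convex ℝ s) (hx : x ∈ s) (hy : y ∈ s)
    (hf : ∀ z ∈ s, HasGradientAt f (f' z) z) {L : ℝ}
    (hlip : ∀ u ∈ s, ∀ v ∈ s, ‖f' u - f' v‖ ≤ L * ‖u - v‖) :
    f y ≤ f x + ⟪f' x, y - x⟫_ℝ + L / 2 * ‖y - x‖ ^ 2 := by
  have hseg : ∀ t ∈ Icc (0 : ℝ) 1, lineMap x y t ∈ s := fun t ht => hs.lineMap_mem hx hy ht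
  have hφ : ∀ t ∈ Icc (0 : ℝ) 1,
      HasDerivAt (fun t => f (lineMap x y t)) ⟪f' (lineMap x y t), y - x⟫_ℝ t :=
    fun t ht => (hf _ (hseg t ht)).hasDerivAt_comp_lineMap
  have hB : ∀ t : ℝ,
      HasDerivAt (fun t => f x + t * ⟪f' x, y - x⟫_ℝ + t ^ 2 * (L / 2 * ‖y - x‖ ^ 2))
        (⟪f' x, y - x⟫_ℝ + t * (L * ‖y - x‖ ^ 2)) t := fun t =>
    ((((hasDerivAt_id t).mul_const _).const_add (f x)).add
      ((hasDerivAt_pow 2 t).mul_const _)).congr_deriv (by simp only [Nat.cast_ofNat]; ring)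
  have hslope : ∀ t ∈ Ico (0 : ℝ) 1,
      ⟪f' (lineMap x y t), y - x⟫_ℝ ≤ ⟪f' x, y - x⟫_ℝ + t * (L * ‖y - x‖ ^ 2) := by
    intro t ht
    have ht' := Ico_subset_Icc_self ht
    calc ⟪f' (lineMap x y t), y - x⟫_ℝ
        = ⟪f' x, y - x⟫_ℝ + ⟪f' (lineMap x y t) - f' x, y - x⟫_ℝ := by
          rw [inner_sub_left]; ring
      _ ≤ ⟪f' x, y - x⟫_ℝ + L * ‖lineMap x y t - x‖ * ‖y - x‖ := by
          gcongr
          exact (real_inner_le_norm _ _).trans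
            (mul_le_mul_of_nonneg_right (hlip _ (hseg t ht') x hx) (norm_nonneg _))
      _ = ⟪f' x, y - x⟫_ℝ + t * (L * ‖y - x‖ ^ 2) := by
          have hdir : lineMap x y t - x = t • (y - x) := by rw [lineMap_apply_module]; module
          rw [hdir, norm_smul, Real.norm_of_nonneg ht.1]
          ring
  simpa using image_le_of_deriv_right_le_deriv_boundary
    (f := fun t => f (lineMap x y t)) (a := 0) (b := 1)
    (fun t ht => (hφ t ht).continuousAt.continuousWithinAt)
    (fun t ht => (hφ t (Ico_subset_Icc_self ht)).hasDerivWithinAt)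
    (by simp) (fun t _ => (hB t).continuousAt.continuousWithinAt)
    (fun t _ => (hB t).hasDerivWithinAt) hslope (right_mem_Icc.2 zero_le_one)

theorem frankWolfe_step (hs : Convex ℝ s) (hf : ∀ z ∈ s, HasGradientAt f (f' z) z) {L : ℝ}
    (hL : 0 ≤ L) (hlip : ∀ u ∈ s, ∀ v ∈ s, ‖f' u - f' v‖ ≤ L * ‖u - v‖) (hx : x ∈ s) (hy : y ∈ s)
    {D γ c : ℝ} (hxy : ‖y - x‖ ≤ D) (hγ : γ ∈ Icc (0 : ℝ) 1) (hdir : ⟪f' x, y - x⟫_ℝ ≤ c - f x) :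
    f ((1 - γ) • x + γ • y) - c ≤ (1 - γ) * (f x - c) + γ ^ 2 / 2 * (L * D ^ 2) := by
  have hmove : (1 - γ) • x + γ • y - x = γ • (y - x) := by module
  have hdesc := le_add_inner_sub_add_sq_of_lipschitz_gradient hs hx
    (show (1 - γ) • x + γ • y ∈ s from hs hx hy (by linarith [hγ.2]) hγ.1 (by ring)) hf hlip
  rw [hmove, inner_smul_right, norm_smul, Real.norm_of_nonneg hγ.1] at hdesc
  have hsq : ‖y - x‖ ^ 2 ≤ D ^ 2 := pow_le_pow_left₀ (norm_nonneg _) hxy 2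
  have := mul_le_mul_of_nonneg_left hdir hγ.1
  have := mul_le_mul_of_nonneg_left hsq (by positivity : 0 ≤ L / 2 * γ ^ 2)
  nlinarith

end Gradient

theorem le_two_mul_div_of_openLoop_recursion {h : ℕ → ℝ} {C : ℝ} (hC : 0 ≤ C)
    (hrec : ∀ k : ℕ, h (k + 1) ≤ (1 - 2 / ((k : ℝ) + 2)) * h k + (2 / ((k : ℝ) + 2)) ^ 2 / 2 * C)
    {K : ℕ} (hK : 1 ≤ K) : h K ≤ 2 * C / ((K : ℝ) + 1) := by
  induction K, hK using Nat.le_induction with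
  | base =>
    have h1 := hrec 0
    norm_num at h1 ⊢
    linarith
  | succ k _ ih =>
    have hk : (0 : ℝ) ≤ k := k.cast_nonneg
    have hγ : 0 ≤ 1 - 2 / ((k : ℝ) + 2) := by
      rw [sub_nonneg, div_le_one (by positivity)]; linarith
    calc h (k + 1)
        ≤ (1 - 2 / ((k : ℝ) + 2)) * (2 * C / ((k : ℝ) + 1)) + (2 / ((k : ℝ) + 2)) ^ 2 / 2 * C :=
          (hrec k).trans (add_le_add_left (mul_le_mul_of_nonneg_left ih hγ) _)
      _ = 2 * C / ((k : ℝ) + 2) - 2 * C / (((k : ℝ) + 1) * ((k : ℝ) + 2) ^ 2) := by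
          field_simp; ring
      _ ≤ 2 * C / (((k + 1 : ℕ) : ℝ) + 1) := by
          push_cast; rw [add_assoc, one_add_one_eq_two]
          exact sub_le_self _ (by positivity)

theorem statement8_general {d : ℕ} (Z : Set (EuclideanSpace ℝ (Fin d)))
    (hZne : Z.Nonempty) (hZcomp : IsCompact Z) (hZconv : Convex ℝ Z)
    (D : ℝ) (hD : ∀ x ∈ Z, ∀ y ∈ Z, ‖x - y‖ ≤ D)
    (f g : EuclideanSpace ℝ (Fin d) → ℝ)
    (gradf gradg : EuclideanSpace ℝ (Fin d) → EuclideanSpace ℝ (Fin d))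
    (hfconv : ConvexOn ℝ Set.univ f)
    (hfdiff : ∀ x, HasGradientAt f (gradf x) x)
    (Lf : ℝ) (hLf : 0 ≤ Lf)
    (hfLip : ∀ x y, ‖gradf x - gradf y‖ ≤ Lf * ‖x - y‖)
    (hgconv : ConvexOn ℝ Set.univ g)
    (hgdiff : ∀ x, HasGradientAt g (gradg x) x)
    (Lg : ℝ) (hLg : 0 ≤ Lg)
    (hgLip : ∀ x ∈ Z, ∀ y ∈ Z, ‖gradg x - gradg y‖ ≤ Lg * ‖x - y‖)
    (εg : ℝ)
    (x s : ℕ → EuclideanSpace ℝ (Fin d)) (γ : ℕ → ℝ)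
    (hγ : ∀ k, γ k = 2 / ((k : ℝ) + 2))
    (hx0 : x 0 ∈ Z) (hx0init : g (x 0) - sInf (g '' Z) ≤ εg / 2)
    (hsmem : ∀ k, s k ∈ Z ∧ ⟪gradg (x k), s k - x k⟫_ℝ ≤ g (x 0) - g (x k))
    (hsmin : ∀ k, ∀ s' ∈ Z, ⟪gradg (x k), s' - x k⟫_ℝ ≤ g (x 0) - g (x k) →
      ⟪gradf (x k), s k⟫_ℝ ≤ ⟪gradf (x k), s'⟫_ℝ)
    (hupd : ∀ k, x (k + 1) = (1 - γ k) • x k + γ k • s k)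
    (K : ℕ) (hK : 1 ≤ K) :
    f (x K) - sInf (f '' {z | z ∈ Z ∧ IsMinOn g Z z}) ≤ 2 * Lf * D^2 / ((K : ℝ) + 1) ∧
      g (x K) - sInf (g '' Z) ≤ 2 * Lg * D^2 / ((K : ℝ) + 1) + εg / 2 := by
  have hγI : ∀ k, γ k ∈ Icc (0 : ℝ) 1 := fun k => by
    rw [hγ k]
    exact ⟨by positivity, (div_le_one (by positivity)).2 (by linarith [k.cast_nonneg (α := ℝ)])⟩
  have hxZ : ∀ k, x k ∈ Z := by
    intro k
    induction k with
    | zero => exact hx0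
    | succ k ih =>
      rw [hupd k]
      exact hZconv ih (hsmem k).1 (by linarith [(hγI k).2]) (hγI k).1 (by ring)
  have hsx : ∀ k, ‖s k - x k‖ ≤ D := fun k => hD _ (hsmem k).1 _ (hxZ k)
  have hgrate : g (x K) - g (x 0) ≤ 2 * (Lg * D ^ 2) / ((K : ℝ) + 1) :=
    le_two_mul_div_of_openLoop_recursion (h := fun k => g (x k) - g (x 0)) (by positivity)
      (fun k => by
        rw [hupd k, ← hγ k]
        exact frankWolfe_step hZconv (fun z _ => hgdiff z) hLg hgLip (hxZ k) (hsmem k).1 (hsx k)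
          (hγI k) (hsmem k).2) hK
  have hfrate : ∀ z ∈ Z, IsMinOn g Z z → f (x K) - f z ≤ 2 * (Lf * D ^ 2) / ((K : ℝ) + 1) :=
    fun z hz hzmin => le_two_mul_div_of_openLoop_recursion (h := fun k => f (x k) - f z)
      (by positivity) (fun k => by
        rw [hupd k, ← hγ k]
        refine frankWolfe_step convex_univ (fun z _ => hfdiff z) hLf (fun u _ v _ => hfLip u v)
          (mem_univ _) (mem_univ _) (hsx k) (hγI k) ?_
        have hfeas : ⟪gradg (x k), z - x k⟫_ℝ ≤ g (x 0) - g (x k) :=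
          (hgconv.inner_sub_le_sub_of_hasGradientAt trivial trivial (hgdiff _)).trans
            (by linarith [isMinOn_iff.1 hzmin _ hx0])
        calc ⟪gradf (x k), s k - x k⟫_ℝ ≤ ⟪gradf (x k), z - x k⟫_ℝ := by
              simpa only [inner_sub_right, sub_le_sub_iff_right] using hsmin k z hz hfeas
          _ ≤ f z - f (x k) := hfconv.inner_sub_le_sub_of_hasGradientAt trivial trivial (hfdiff _))
      hK
  obtain ⟨z₀, hz₀, hz₀min⟩ :=
    hZcomp.exists_isMinOn hZne (HasGradientAt.continuousOn fun z _ => hgdiff z)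
  have hfinf : f (x K) - 2 * (Lf * D ^ 2) / ((K : ℝ) + 1) ≤
      sInf (f '' {z | z ∈ Z ∧ IsMinOn g Z z}) :=
    le_csInf ⟨_, z₀, ⟨hz₀, hz₀min⟩, rfl⟩ (by
      rintro _ ⟨z, ⟨hz, hzmin⟩, rfl⟩
      linarith [hfrate z hz hzmin])
  constructor <;> rw [mul_assoc] <;> linarith

/-- **Theorem 1, convex upper level.** For convex `f` and CG-BiO iterates
with stepsizes `γ_k = 2/(k+2)` started at `x_0` with `g(x_0) − g* ≤ ε_g/2`,
`f(x_K) − f* ≤ 2L_f D²/(K+1)` and `g(x_K) − g* ≤ 2L_g D²/(K+1) + ε_g/2` for all `K ≥ 1`. -/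
theorem statement8 {d : ℕ} (Z : Set (EuclideanSpace ℝ (Fin d)))
    (hZne : Z.Nonempty) (hZcomp : IsCompact Z) (hZconv : Convex ℝ Z)
    (D : ℝ) (hD : ∀ x ∈ Z, ∀ y ∈ Z, ‖x - y‖ ≤ D)
    (f g : EuclideanSpace ℝ (Fin d) → ℝ)
    (gradf gradg : EuclideanSpace ℝ (Fin d) → EuclideanSpace ℝ (Fin d))
    (hfconv : ConvexOn ℝ Set.univ f)
    (hfdiff : ∀ x, HasGradientAt f (gradf x) x)
    (Lf : ℝ) (hLf : 0 ≤ Lf)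
    (hfLip : ∀ x y, ‖gradf x - gradf y‖ ≤ Lf * ‖x - y‖)
    (hgconv : ConvexOn ℝ Set.univ g)
    (hgdiff : ∀ x, HasGradientAt g (gradg x) x)
    (Lg : ℝ) (hLg : 0 ≤ Lg)
    (hgLip : ∀ x ∈ Z, ∀ y ∈ Z, ‖gradg x - gradg y‖ ≤ Lg * ‖x - y‖)
    (εg : ℝ) (hεg : 0 < εg)
    (x s : ℕ → EuclideanSpace ℝ (Fin d)) (γ : ℕ → ℝ)
    (hγ : ∀ k, γ k = 2 / ((k : ℝ) + 2))
    (hx0 : x 0 ∈ Z) (hx0init : g (x 0) - sInf (g '' Z) ≤ εg / 2)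
    (hsmem : ∀ k, s k ∈ Z ∧ ⟪gradg (x k), s k - x k⟫_ℝ ≤ g (x 0) - g (x k))
    (hsmin : ∀ k, ∀ s' ∈ Z, ⟪gradg (x k), s' - x k⟫_ℝ ≤ g (x 0) - g (x k) →
      ⟪gradf (x k), s k⟫_ℝ ≤ ⟪gradf (x k), s'⟫_ℝ)
    (hupd : ∀ k, x (k + 1) = (1 - γ k) • x k + γ k • s k)
    (K : ℕ) (hK : 1 ≤ K) :
    f (x K) - sInf (f '' {z | z ∈ Z ∧ IsMinOn g Z z}) ≤ 2 * Lf * D^2 / ((K : ℝ) + 1) ∧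
      g (x K) - sInf (g '' Z) ≤ 2 * Lg * D^2 / ((K : ℝ) + 1) + εg / 2 :=
  statement8_general Z hZne hZcomp hZconv D hD f g gradf gradg hfconv hfdiff Lf hLf hfLip hgconv
    hgdiff Lg hLg hgLip εg x s γ hγ hx0 hx0init hsmem hsmin hupd K hK
end

section
/- Suppose g satisfies the r-th-order Hölderian error bound with constant α > 0 and r ≥ 1, f is convex, and let M = max_{x∈X*_g} ‖∇f(x)‖. Then every x̂ ∈ Z with g(x̂) − g* ≤ ε_g satisfies f(x̂) − f* ≥ −M (r ε_g/α)^{1/r}, where f* = min_{s∈X*_g} f(s). -/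
open scoped InnerProductSpace

/-!
Let `S` be the set of minimizers of `g` on `Z`; it is compact, so `x̂` has a nearest point
`s ∈ S`. The Hölderian error bound turns `g(x̂) − g* ≤ ε_g` into `‖x̂ − s‖ ≤ (r ε_g/α)^{1/r}`,
and the first-order condition for the convex `f` gives
`f(x̂) − f* ≥ f(x̂) − f(s) ≥ ⟪∇f(s), x̂ − s⟫ ≥ −‖∇f(s)‖ ‖x̂ − s‖ ≥ −M ‖x̂ − s‖`.
The last step needs the gradients of `f` to be bounded on `S`, since `sSup` of an unbounded set
is the junk value `0`; this follows from convexity, as `f` is bounded above on the compact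
`1`-thickening of `S` and below on `S`.
-/

section Gradient

variable {E : Type*} [NormedAddCommGroup E] [InnerProductSpace ℝ E] [CompleteSpace E]
  {f : E → ℝ} {s : Set E} {x y p : E}

theorem ConvexOn.inner_gradient_sub_le (hf : ConvexOn ℝ s f) (hx : x ∈ s) (hy : y ∈ s)
    (hp : HasGradientAt f p x) : ⟪p, y - x⟫_ℝ ≤ f y - f x := by
  set φ : ℝ → ℝ := f ∘ AffineMap.lineMap x y
  have hφconv : ConvexOn ℝ (AffineMap.lineMap x y ⁻¹' s) φ := hf.comp_affineMap _
  have hφderiv : HasDerivAt φ ⟪p, y - x⟫_ℝ 0 := by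
    have hp' : HasFDerivAt f (InnerProductSpace.toDual ℝ E p) (AffineMap.lineMap x y (0 : ℝ)) := by
      simpa using hp.hasFDerivAt
    simpa using hp'.comp_hasDerivAt (0 : ℝ) AffineMap.hasDerivAt_lineMap
  have hslope := hφconv.le_slope_of_hasDerivAt (by simpa using hx) (by simpa using hy)
    one_pos hφderiv
  simpa [φ, slope] using hslope

theorem ConvexOn.mul_norm_gradient_le {ρ B : ℝ} (hf : ConvexOn ℝ (Metric.closedBall x ρ) f)
    (hρ : 0 ≤ ρ) (hp : HasGradientAt f p x) (hB : ∀ y ∈ Metric.closedBall x ρ, f y ≤ B) :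
    ρ * ‖p‖ ≤ B - f x := by
  set y := x + (ρ / ‖p‖) • p
  have hy : y ∈ Metric.closedBall x ρ := by
    rcases eq_or_ne p 0 with rfl | hp0
    · simpa [y] using hρ
    · simp [y, dist_eq_norm, norm_smul, abs_of_nonneg hρ, hp0]
  have hinner : ⟪p, y - x⟫_ℝ = ρ * ‖p‖ := by
    rcases eq_or_ne p 0 with rfl | hp0
    · simp
    · simp only [y, add_sub_cancel_left, real_inner_smul_right, real_inner_self_eq_norm_sq]
      field_simp
  have := hf.inner_gradient_sub_le (Metric.mem_closedBall_self hρ) hy hp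
  linarith [hB y hy]

theorem ConvexOn.bddAbove_norm_gradient_image [ProperSpace E] {gradf : E → E} {K : Set E}
    (hK : IsCompact K) (hf : ConvexOn ℝ Set.univ f) (hgrad : ∀ x, HasGradientAt f (gradf x) x) :
    BddAbove ((fun x => ‖gradf x‖) '' K) := by
  have hcont : Continuous f := continuous_iff_continuousAt.2 fun x => (hgrad x).continuousAt
  obtain ⟨B, hB⟩ := ((hK.cthickening (r := 1)).image hcont).bddAbove
  obtain ⟨b, hb⟩ := (hK.image hcont).bddBelow
  refine ⟨B - b, Set.forall_mem_image.2 fun x hx => ?_⟩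
  have hball : Metric.closedBall x 1 ⊆ Metric.cthickening 1 K :=
    Metric.closedBall_subset_cthickening hx 1
  have := (hf.subset (Set.subset_univ _) (convex_closedBall x 1)).mul_norm_gradient_le zero_le_one
    (hgrad x) fun y hy => hB (Set.mem_image_of_mem f (hball hy))
  linarith [hb (Set.mem_image_of_mem f hx)]

end Gradient

theorem IsCompact.setOf_isMinOn {X α : Type*} [TopologicalSpace X] [LinearOrder α]
    [TopologicalSpace α] [OrderClosedTopology α] {Z : Set X} {g : X → α} (hZ : IsCompact Z)
    (hg : Continuous g) : IsCompact {z | z ∈ Z ∧ IsMinOn g Z z} := by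
  have hS : {z | z ∈ Z ∧ IsMinOn g Z z} = Z ∩ ⋂ y ∈ Z, {x | g x ≤ g y} := by
    ext x
    simp only [Set.mem_ofPred_eq, Set.mem_inter_iff, Set.mem_iInter, isMinOn_iff]
  rw [hS]
  exact hZ.inter_right (isClosed_biInter fun y _ => isClosed_le hg continuous_const)

theorem Real.le_rpow_one_div_of_div_mul_rpow_le {α r D ε : ℝ} (hα : 0 < α) (hr : 0 < r)
    (hD : 0 ≤ D) (h : α / r * D ^ r ≤ ε) : D ≤ (r * ε / α) ^ (1 / r) := by
  have hDr : α * D ^ r ≤ r * ε := by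
    rwa [div_mul_eq_mul_div, div_le_iff₀ hr, mul_comm ε] at h
  have hDr_nonneg : 0 ≤ α * D ^ r := by positivity
  rw [one_div, Real.le_rpow_inv_iff_of_pos hD (div_nonneg (by linarith) hα.le) hr, le_div_iff₀ hα]
  linarith

theorem statement12_general {d : ℕ} (Z : Set (EuclideanSpace ℝ (Fin d)))
    (hZcomp : IsCompact Z)
    (f g : EuclideanSpace ℝ (Fin d) → ℝ)
    (gradf gradg : EuclideanSpace ℝ (Fin d) → EuclideanSpace ℝ (Fin d))
    (hfconv : ConvexOn ℝ Set.univ f)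
    (hfdiff : ∀ x, HasGradientAt f (gradf x) x)
    (hgdiff : ∀ x, HasGradientAt g (gradg x) x)
    (α r : ℝ) (hα : 0 < α) (hr : 1 ≤ r)
    (hHEB : ∀ x ∈ Z,
      (α / r) * Metric.infDist x {z | z ∈ Z ∧ IsMinOn g Z z} ^ r ≤ g x - sInf (g '' Z))
    (M : ℝ) (hM : M = sSup ((fun x => ‖gradf x‖) '' {z | z ∈ Z ∧ IsMinOn g Z z}))
    (εg : ℝ)
    (xhat : EuclideanSpace ℝ (Fin d)) (hxhatZ : xhat ∈ Z)
    (hxhatg : g xhat - sInf (g '' Z) ≤ εg) :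
    -M * (r * εg / α) ^ (1 / r) ≤ f xhat - sInf (f '' {z | z ∈ Z ∧ IsMinOn g Z z}) := by
  set S := {z | z ∈ Z ∧ IsMinOn g Z z}
  have hgcont : Continuous g := continuous_iff_continuousAt.2 fun x => (hgdiff x).continuousAt
  have hfcont : Continuous f := continuous_iff_continuousAt.2 fun x => (hfdiff x).continuousAt
  have hScomp : IsCompact S := hZcomp.setOf_isMinOn hgcont
  obtain ⟨z₀, hz₀⟩ := hZcomp.exists_isMinOn ⟨xhat, hxhatZ⟩ hgcont.continuousOn
  obtain ⟨s, hsS, hdist⟩ := hScomp.exists_infDist_eq_dist ⟨z₀, hz₀⟩ xhat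
  have hdist_le : ‖xhat - s‖ ≤ (r * εg / α) ^ (1 / r) := by
    rw [← dist_eq_norm, ← hdist]
    exact Real.le_rpow_one_div_of_div_mul_rpow_le hα (by linarith) Metric.infDist_nonneg
      ((hHEB xhat hxhatZ).trans hxhatg)
  have hMs : ‖gradf s‖ ≤ M :=
    hM ▸ le_csSup (hfconv.bddAbove_norm_gradient_image hScomp hfdiff) ⟨s, hsS, rfl⟩
  have hfstar : sInf (f '' S) ≤ f s :=
    csInf_le (hScomp.image hfcont).bddBelow ⟨s, hsS, rfl⟩
  calc -M * (r * εg / α) ^ (1 / r) ≤ -(‖gradf s‖ * ‖xhat - s‖) := by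
        rw [neg_mul, neg_le_neg_iff]
        exact mul_le_mul hMs hdist_le (norm_nonneg _) ((norm_nonneg _).trans hMs)
    _ ≤ ⟪gradf s, xhat - s⟫_ℝ := neg_le_of_abs_le (abs_real_inner_le_norm _ _)
    _ ≤ f xhat - f s := hfconv.inner_gradient_sub_le trivial trivial (hfdiff s)
    _ ≤ f xhat - sInf (f '' S) := by linarith

/-- **Proposition 1(i).** Under the `r`-th-order Hölderian error bound on `g`
with constant `α > 0` and `r ≥ 1`, any `xhat ∈ Z` with `g(xhat) − g* ≤ ε_g` satisfies
`f(xhat) − f* ≥ −M (r ε_g/α)^{1/r}`, where `M = max_{x∈X*_g} ‖∇f(x)‖` and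
`f* = min_{s∈X*_g} f(s)`. -/
theorem statement12 {d : ℕ} (Z : Set (EuclideanSpace ℝ (Fin d)))
    (hZne : Z.Nonempty) (hZcomp : IsCompact Z) (hZconv : Convex ℝ Z)
    (f g : EuclideanSpace ℝ (Fin d) → ℝ)
    (gradf gradg : EuclideanSpace ℝ (Fin d) → EuclideanSpace ℝ (Fin d))
    (hfconv : ConvexOn ℝ Set.univ f)
    (hfdiff : ∀ x, HasGradientAt f (gradf x) x)
    (hgconv : ConvexOn ℝ Set.univ g)
    (hgdiff : ∀ x, HasGradientAt g (gradg x) x)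
    (α r : ℝ) (hα : 0 < α) (hr : 1 ≤ r)
    (hHEB : ∀ x ∈ Z,
      (α / r) * Metric.infDist x {z | z ∈ Z ∧ IsMinOn g Z z} ^ r ≤ g x - sInf (g '' Z))
    (M : ℝ) (hM : M = sSup ((fun x => ‖gradf x‖) '' {z | z ∈ Z ∧ IsMinOn g Z z}))
    (εg : ℝ) (hεg : 0 < εg)
    (xhat : EuclideanSpace ℝ (Fin d)) (hxhatZ : xhat ∈ Z)
    (hxhatg : g xhat - sInf (g '' Z) ≤ εg) :
    -M * (r * εg / α) ^ (1 / r) ≤ f xhat - sInf (f '' {z | z ∈ Z ∧ IsMinOn g Z z}) :=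
  statement12_general Z hZcomp f g gradf gradg hfconv hfdiff hgdiff α r hα hr hHEB M hM εg xhat
    hxhatZ hxhatg
end
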